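/- arXiv:1807.09857 — 5 statements merged into one kernel-verified Lean document; each statement's English description precedes it below -/
import Mathlib

section
/- Let ψ(x) = x²/2 + a x + δψ(x) with δψ and δψ'' bounded, and let μ_m denote the exponentially tilted probability measure with density exp(−ψ*(ẑ_m) + ẑ_m z − ψ(z)), where ẑ_m is chosen so that μ_m has mean m. Then there exist constants 0 < c < C < ∞ such that for all m ∈ ℝ: c ≤ Var(μ_m) ≤ C and |∫ (z−m)³ μ_m(dz)| ≤ C, uniformly in m. -/
/-!
Completing the square, `exp (zh z - ψ z)` is a constant multiple of `exp (-δψ z)` times the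
density of `𝒩(zh - a, 1)`, so every tilted average is an average against this Gaussian with a
weight `w` taking values in `[e^{-Cb}, e^{Cb}]`. Such a weight distorts averages of nonnegative
functions by a factor of at most `ρ = e^{2 Cb}`. Hence the tilted variance is at least `ρ⁻¹` times
the Gaussian second moment about `m`, which is at least the Gaussian variance `1`, and at most the
tilted second moment about `zh - a`, which is at most `ρ`. The same bound gives
`|m - (zh - a)| ≤ ρ`, and then the third absolute moment about `m` is controlled by Gaussian
moments about a point at distance at most `ρ` from the Gaussian mean.
-/

open MeasureTheory ProbabilityTheory Real

noncomputable def weightedAvg {α : Type*} [MeasurableSpace α] (μ : Measure α) (w h : α → ℝ) : ℝ :=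
  (∫ x, h x * w x ∂μ) / ∫ x, w x ∂μ

section WeightedAvg

variable {α : Type*} [MeasurableSpace α] {μ : Measure α} {w h : α → ℝ} {k K : ℝ}

lemma abs_weightedAvg_le (hw0 : ∀ x, 0 ≤ w x) :
    |weightedAvg μ w h| ≤ weightedAvg μ w (fun x => |h x|) := by
  rw [weightedAvg, weightedAvg, abs_div, abs_of_nonneg (a := ∫ x, w x ∂μ) (integral_nonneg hw0)]
  refine div_le_div_of_nonneg_right ((abs_integral_le_integral_abs).trans_eq ?_)
    (integral_nonneg hw0)
  simp_rw [abs_mul, abs_of_nonneg (hw0 _)]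

lemma ae_norm_weight_le (hk : 0 < k) (hwk : ∀ x, k ≤ w x) (hwK : ∀ x, w x ≤ K) :
    ∀ᵐ x ∂μ, ‖w x‖ ≤ K :=
  ae_of_all _ fun x => (Real.norm_of_nonneg (hk.le.trans (hwk x))).trans_le (hwK x)

variable [IsProbabilityMeasure μ]

lemma integrable_weight (hw : AEStronglyMeasurable w μ) (hk : 0 < k)
    (hwk : ∀ x, k ≤ w x) (hwK : ∀ x, w x ≤ K) : Integrable w μ :=
  Integrable.of_bound hw K (ae_norm_weight_le hk hwk hwK)

lemma le_integral_weight (hw : AEStronglyMeasurable w μ) (hk : 0 < k)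
    (hwk : ∀ x, k ≤ w x) (hwK : ∀ x, w x ≤ K) : k ≤ ∫ x, w x ∂μ := by
  simpa using integral_mono (integrable_const k) (integrable_weight hw hk hwk hwK) hwk

lemma integral_weight_le (hw : AEStronglyMeasurable w μ) (hk : 0 < k)
    (hwk : ∀ x, k ≤ w x) (hwK : ∀ x, w x ≤ K) : ∫ x, w x ∂μ ≤ K := by
  simpa using integral_mono (integrable_weight hw hk hwk hwK) (integrable_const K) hwK

lemma weightedAvg_le (hw : AEStronglyMeasurable w μ) (hk : 0 < k)
    (hwk : ∀ x, k ≤ w x) (hwK : ∀ x, w x ≤ K) (hh0 : ∀ x, 0 ≤ h x) (hh : Integrable h μ) :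
    weightedAvg μ w h ≤ K / k * ∫ x, h x ∂μ := by
  have hnum : ∫ x, h x * w x ∂μ ≤ K * ∫ x, h x ∂μ := by
    rw [← integral_const_mul]
    refine integral_mono_of_nonneg (ae_of_all _ fun x => ?_) (hh.const_mul K)
      (ae_of_all _ fun x => ?_)
    · exact mul_nonneg (hh0 x) (hk.le.trans (hwk x))
    · simpa only [mul_comm K] using mul_le_mul_of_nonneg_left (hwK x) (hh0 x)
  have hK : 0 ≤ K := hk.le.trans ((le_integral_weight hw hk hwk hwK).trans
    (integral_weight_le hw hk hwk hwK))
  rw [weightedAvg, div_mul_eq_mul_div]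
  exact div_le_div₀ (mul_nonneg hK (integral_nonneg hh0)) hnum hk
    (le_integral_weight hw hk hwk hwK)

lemma le_weightedAvg (hw : AEStronglyMeasurable w μ) (hk : 0 < k)
    (hwk : ∀ x, k ≤ w x) (hwK : ∀ x, w x ≤ K) (hh0 : ∀ x, 0 ≤ h x) (hh : Integrable h μ) :
    k / K * ∫ x, h x ∂μ ≤ weightedAvg μ w h := by
  have hnum : k * ∫ x, h x ∂μ ≤ ∫ x, h x * w x ∂μ := by
    rw [← integral_const_mul]
    refine integral_mono (hh.const_mul k) (hh.mul_bdd hw (ae_norm_weight_le hk hwk hwK))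
      fun x => ?_
    simpa only [mul_comm k] using mul_le_mul_of_nonneg_left (hwk x) (hh0 x)
  rw [weightedAvg, div_mul_eq_mul_div]
  exact div_le_div₀ (integral_nonneg fun x => mul_nonneg (hh0 x) (hk.le.trans (hwk x))) hnum
    (hk.trans_le (le_integral_weight hw hk hwk hwK)) (integral_weight_le hw hk hwk hwK)

lemma weightedAvg_sub_sq (hw : AEStronglyMeasurable w μ) (hk : 0 < k)
    (hwk : ∀ x, k ≤ w x) (hwK : ∀ x, w x ≤ K) {X : α → ℝ} (hX : MemLp X 2 μ) (t : ℝ) :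
    weightedAvg μ w (fun x => (X x - t) ^ 2) =
      weightedAvg μ w (fun x => (X x - weightedAvg μ w X) ^ 2) + (weightedAvg μ w X - t) ^ 2 := by
  set m := weightedAvg μ w X
  have hbdd := ae_norm_weight_le (μ := μ) hk hwk hwK
  have hW : 0 < ∫ x, w x ∂μ := hk.trans_le (le_integral_weight hw hk hwk hwK)
  have hsq : Integrable (fun x => (X x - m) ^ 2 * w x) μ :=
    (hX.sub (memLp_const m)).integrable_sq.mul_bdd hw hbdd
  have hlin : Integrable (fun x => X x * w x) μ := (hX.integrable one_le_two).mul_bdd hw hbdd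
  have hmean : ∫ x, X x * w x ∂μ = m * ∫ x, w x ∂μ := by
    simp only [m, weightedAvg, div_mul_cancel₀ _ hW.ne']
  have hexpand : ∫ x, (X x - t) ^ 2 * w x ∂μ = ∫ x, (X x - m) ^ 2 * w x ∂μ
      + (2 * (m - t)) * ∫ x, X x * w x ∂μ + ((m - t) ^ 2 - 2 * (m - t) * m) * ∫ x, w x ∂μ := by
    rw [← integral_const_mul, ← integral_const_mul, ← integral_add hsq (hlin.const_mul _),
      ← integral_add (by exact hsq.add (hlin.const_mul _))
        ((integrable_weight hw hk hwk hwK).const_mul _)]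
    congr 1 with x
    ring
  rw [weightedAvg, weightedAvg, hexpand, hmean]
  field_simp
  ring

end WeightedAvg

lemma integrable_abs_sub_pow_gaussianReal (b t : ℝ) (v : NNReal) (n : ℕ) :
    Integrable (fun z => |z - t| ^ n) (gaussianReal b v) := by
  simpa using ((memLp_id_gaussianReal (μ := b) (v := v) n).sub (memLp_const t)).integrable_norm_pow'

lemma integral_abs_sub_pow_gaussianReal (b : ℝ) (v : NNReal) (n : ℕ) :
    ∫ z, |z - b| ^ n ∂gaussianReal b v = ∫ x, |x| ^ n ∂gaussianReal 0 v := by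
  rw [← sub_self b, ← gaussianReal_map_sub_const b,
    integral_map (by fun_prop) (by fun_prop)]

lemma integral_sub_sq_gaussianReal (b : ℝ) (v : NNReal) :
    ∫ z, (z - b) ^ 2 ∂gaussianReal b v = v := by
  rw [← variance_id_gaussianReal (μ := b), variance_eq_integral aemeasurable_id]
  simp [integral_id_gaussianReal]

lemma variance_le_integral_sub_sq_gaussianReal (b t : ℝ) (v : NNReal) :
    (v : ℝ) ≤ ∫ z, (z - t) ^ 2 ∂gaussianReal b v := by
  have := variance_le_expectation_sq (μ := gaussianReal b v) (X := fun z => z - t) (by fun_prop)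
  rw [variance_sub_const (by fun_prop)] at this
  simpa using (variance_id_gaussianReal (μ := b) (v := v)).symm.trans_le this

lemma integral_abs_sub_pow_le_gaussianReal (b t : ℝ) (v : NNReal) (n : ℕ) :
    ∫ z, |z - t| ^ n ∂gaussianReal b v ≤
      2 ^ (n - 1) * (∫ x, |x| ^ n ∂gaussianReal 0 v + |b - t| ^ n) := by
  have hpt : ∀ z, |z - t| ^ n ≤ 2 ^ (n - 1) * (|z - b| ^ n + |b - t| ^ n) := fun z =>
    (pow_le_pow_left₀ (abs_nonneg _) (abs_sub_le z b t) n).trans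
      (add_pow_le (abs_nonneg _) (abs_nonneg _) n)
  have hdom : Integrable (fun z => |z - b| ^ n + |b - t| ^ n) (gaussianReal b v) :=
    (integrable_abs_sub_pow_gaussianReal b b v n).add (integrable_const _)
  refine (integral_mono (integrable_abs_sub_pow_gaussianReal b t v n) (hdom.const_mul _)
    hpt).trans_eq ?_
  rw [integral_const_mul, integral_add (integrable_abs_sub_pow_gaussianReal b b v n)
    (integrable_const _), integral_abs_sub_pow_gaussianReal]
  simp

lemma integral_mul_exp_tilt_eq (a zh : ℝ) {δψ ψ : ℝ → ℝ}
    (hψ : ∀ x, ψ x = x ^ 2 / 2 + a * x + δψ x) (h : ℝ → ℝ) :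
    ∫ z, h z * exp (zh * z - ψ z) =
      (√(2 * π) * exp ((zh - a) ^ 2 / 2)) *
        ∫ z, h z * exp (-δψ z) ∂gaussianReal (zh - a) 1 := by
  rw [integral_gaussianReal_eq_integral_smul one_ne_zero, ← integral_const_mul]
  congr 1 with z
  have hπ : √(2 * π) ≠ 0 := by positivity
  simp only [gaussianPDFReal, hψ, NNReal.coe_one, mul_one, smul_eq_mul]
  field_simp
  simp only [mul_assoc, ← exp_add]
  ring_nf

lemma div_integral_exp_tilt_eq_weightedAvg (a zh : ℝ) {δψ ψ : ℝ → ℝ}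
    (hψ : ∀ x, ψ x = x ^ 2 / 2 + a * x + δψ x) (h : ℝ → ℝ) :
    (∫ z, h z * exp (zh * z - ψ z)) / ∫ z, exp (zh * z - ψ z) =
      weightedAvg (gaussianReal (zh - a) 1) (fun z => exp (-δψ z)) h := by
  have hden := integral_mul_exp_tilt_eq a zh hψ 1
  simp only [Pi.one_apply, one_mul] at hden
  rw [integral_mul_exp_tilt_eq a zh hψ, hden, weightedAvg, mul_div_mul_left _ _ (by positivity)]

section TiltedGaussian

variable {w : ℝ → ℝ} {k K b : ℝ} {v : NNReal}

lemma le_weightedAvg_sub_sq_gaussianReal (hw : AEStronglyMeasurable w (gaussianReal b v))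
    (hk : 0 < k) (hwk : ∀ x, k ≤ w x) (hwK : ∀ x, w x ≤ K) (t : ℝ) :
    k / K * v ≤ weightedAvg (gaussianReal b v) w (fun z => (z - t) ^ 2) :=
  calc k / K * v ≤ k / K * ∫ z, (z - t) ^ 2 ∂gaussianReal b v := by
        have hK : 0 ≤ K := hk.le.trans ((hwk 0).trans (hwK 0))
        gcongr
        exact variance_le_integral_sub_sq_gaussianReal b t v
    _ ≤ _ := le_weightedAvg hw hk hwk hwK (fun z => sq_nonneg (z - t))
        ((memLp_id_gaussianReal 2).sub (memLp_const t)).integrable_sq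

lemma weightedAvg_sub_mean_sq_gaussianReal_le (hw : AEStronglyMeasurable w (gaussianReal b v))
    (hk : 0 < k) (hwk : ∀ x, k ≤ w x) (hwK : ∀ x, w x ≤ K) :
    weightedAvg (gaussianReal b v) w (fun z => (z - b) ^ 2) ≤ K / k * v := by
  simpa [integral_sub_sq_gaussianReal] using weightedAvg_le hw hk hwk hwK
    (fun z => sq_nonneg (z - b)) ((memLp_id_gaussianReal 2).sub (memLp_const b)).integrable_sq

lemma weightedAvg_sub_sq_add_sq_le_gaussianReal (hw : AEStronglyMeasurable w (gaussianReal b v))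
    (hk : 0 < k) (hwk : ∀ x, k ≤ w x) (hwK : ∀ x, w x ≤ K) :
    let m := weightedAvg (gaussianReal b v) w (fun z => z)
    weightedAvg (gaussianReal b v) w (fun z => (z - m) ^ 2) + (m - b) ^ 2 ≤ K / k * v :=
  (weightedAvg_sub_sq hw hk hwk hwK (memLp_id_gaussianReal 2) b).symm.trans_le
    (weightedAvg_sub_mean_sq_gaussianReal_le hw hk hwk hwK)

lemma abs_weightedAvg_sub_pow_three_gaussianReal_le
    (hw : AEStronglyMeasurable w (gaussianReal b v)) (hk : 0 < k) (hwk : ∀ x, k ≤ w x)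
    (hwK : ∀ x, w x ≤ K) (t : ℝ) :
    |weightedAvg (gaussianReal b v) w (fun z => (z - t) ^ 3)| ≤
      K / k * (4 * (∫ x, |x| ^ 3 ∂gaussianReal 0 v + |b - t| ^ 3)) :=
  calc |weightedAvg (gaussianReal b v) w (fun z => (z - t) ^ 3)|
      ≤ weightedAvg (gaussianReal b v) w (fun z => |z - t| ^ 3) := by
        simp_rw [← abs_pow]
        exact abs_weightedAvg_le fun z => hk.le.trans (hwk z)
    _ ≤ K / k * ∫ z, |z - t| ^ 3 ∂gaussianReal b v :=
        weightedAvg_le hw hk hwk hwK (fun z => by positivity)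
          (integrable_abs_sub_pow_gaussianReal b t v 3)
    _ ≤ K / k * (4 * (∫ x, |x| ^ 3 ∂gaussianReal 0 v + |b - t| ^ 3)) := by
        have hK : 0 ≤ K := hk.le.trans ((hwk 0).trans (hwK 0))
        gcongr
        exact (integral_abs_sub_pow_le_gaussianReal b t v 3).trans_eq (by norm_num)

end TiltedGaussian

theorem stmt_5_general (a : ℝ) (δψ : ℝ → ℝ) (Cb : ℝ)
    (hδ : ContDiff ℝ 2 δψ)
    (hbd : ∀ x, |δψ x| ≤ Cb)
    (ψ : ℝ → ℝ) (hψ : ∀ x, ψ x = x ^ 2 / 2 + a * x + δψ x) :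
    ∃ c C : ℝ, 0 < c ∧ c < C ∧
      ∀ m zh : ℝ,
        (∫ z, z * Real.exp (zh * z - ψ z)) / (∫ z, Real.exp (zh * z - ψ z)) = m →
        (c ≤ (∫ z, (z - m) ^ 2 * Real.exp (zh * z - ψ z)) /
              (∫ z, Real.exp (zh * z - ψ z)) ∧
         (∫ z, (z - m) ^ 2 * Real.exp (zh * z - ψ z)) /
              (∫ z, Real.exp (zh * z - ψ z)) ≤ C ∧
         |(∫ z, (z - m) ^ 3 * Real.exp (zh * z - ψ z)) /
              (∫ z, Real.exp (zh * z - ψ z))| ≤ C) := by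
  have hCb : 0 ≤ Cb := (abs_nonneg _).trans (hbd 0)
  have hk : 0 < exp (-Cb) := exp_pos _
  have hwk : ∀ z, exp (-Cb) ≤ exp (-δψ z) := fun z =>
    exp_le_exp.2 (neg_le_neg (abs_le.1 (hbd z)).2)
  have hwK : ∀ z, exp (-δψ z) ≤ exp Cb := fun z =>
    exp_le_exp.2 (by linarith [(abs_le.1 (hbd z)).1])
  have hw : ∀ b, AEStronglyMeasurable (fun z => exp (-δψ z)) (gaussianReal b 1) := fun _ =>
    hδ.continuous.neg.rexp.aestronglyMeasurable
  set ρ := exp Cb / exp (-Cb)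
  have hρ : 1 ≤ ρ := (one_le_div hk).2 (exp_le_exp.2 (by linarith))
  set κ := ∫ x, |x| ^ 3 ∂gaussianReal 0 1
  have hC : 4 * ρ ≤ 4 * ρ * (κ + ρ ^ 3) := by
    have hκ : 0 ≤ κ := integral_nonneg fun x => by positivity
    nlinarith [one_le_pow₀ hρ (n := 3)]
  refine ⟨ρ⁻¹, 4 * ρ * (κ + ρ ^ 3), inv_pos.2 (by positivity), ?_, fun m zh hm => ?_⟩
  · linarith [inv_le_one_of_one_le₀ hρ]
  simp only [div_integral_exp_tilt_eq_weightedAvg a zh hψ] at hm ⊢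
  have hvar_lo := le_weightedAvg_sub_sq_gaussianReal (hw (zh - a)) hk hwk hwK m
  have hvar_hi := weightedAvg_sub_sq_add_sq_le_gaussianReal (hw (zh - a)) hk hwk hwK
  simp only [hm, NNReal.coe_one, mul_one] at hvar_lo hvar_hi
  rw [← inv_div] at hvar_lo
  have hmb : |zh - a - m| ≤ ρ := by
    rw [abs_sub_comm]
    refine abs_le_of_sq_le_sq ?_ (by positivity)
    nlinarith [inv_pos.2 (zero_lt_one.trans_le hρ)]
  refine ⟨hvar_lo, by nlinarith [sq_nonneg (m - (zh - a))], ?_⟩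
  refine (abs_weightedAvg_sub_pow_three_gaussianReal_le (hw (zh - a)) hk hwk hwK m).trans ?_
  have : |zh - a - m| ^ 3 ≤ ρ ^ 3 := by gcongr
  nlinarith

/-- Uniform bounds on the variance and absolute third centered moment of the
exponentially tilted measures `μ_m` (with density proportional to
`exp(ẑ z − ψ(z))`, the tilt `ẑ` chosen so that the mean is `m`), uniformly in
the mean `m`. -/
theorem stmt_5 (a : ℝ) (δψ : ℝ → ℝ) (Cb : ℝ)
    (hδ : ContDiff ℝ 2 δψ)
    (hbd : ∀ x, |δψ x| ≤ Cb)
    (hbd2 : ∀ x, |deriv (deriv δψ) x| ≤ Cb)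
    (ψ : ℝ → ℝ) (hψ : ∀ x, ψ x = x ^ 2 / 2 + a * x + δψ x) :
    ∃ c C : ℝ, 0 < c ∧ c < C ∧
      ∀ m zh : ℝ,
        (∫ z, z * Real.exp (zh * z - ψ z)) / (∫ z, Real.exp (zh * z - ψ z)) = m →
        (c ≤ (∫ z, (z - m) ^ 2 * Real.exp (zh * z - ψ z)) /
              (∫ z, Real.exp (zh * z - ψ z)) ∧
         (∫ z, (z - m) ^ 2 * Real.exp (zh * z - ψ z)) /
              (∫ z, Real.exp (zh * z - ψ z)) ≤ C ∧
         |(∫ z, (z - m) ^ 3 * Real.exp (zh * z - ψ z)) /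
              (∫ z, Real.exp (zh * z - ψ z))| ≤ C) :=
  stmt_5_general a δψ Cb hδ hbd ψ hψ
end

section
/- (Holley–Stroock perturbation) Suppose ν ∈ P(X) satisfies a logarithmic Sobolev inequality with constant ρ > 0 on a Euclidean space X, and δψ : X → ℝ is a bounded measurable function. Define ν̃ by dν̃/dν = Z⁻¹ exp(−δψ) with Z the normalizing constant. Then ν̃ satisfies a logarithmic Sobolev inequality with constant ρ · exp(−2 osc(δψ)), where osc(δψ) = sup δψ − inf δψ. -/
open MeasureTheory Real ENNReal NNReal

/-- A probability measure `ν` on a Euclidean space satisfies a logarithmic Sobolev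
inequality with constant `ρ` if for all smooth positive test functions `h`,
`∫ h ln h dν − (∫ h dν) ln(∫ h dν) ≤ (1/ρ) ∫ |∇h|²/(2h) dν`. -/
def LSIconst {E : Type*} [NormedAddCommGroup E] [InnerProductSpace ℝ E]
    [CompleteSpace E] [MeasurableSpace E] (ν : Measure E) (ρ : ℝ) : Prop :=
  ∀ h : E → ℝ, ContDiff ℝ (⊤ : ℕ∞) h → (∀ x, 0 < h x) →
    (∫ x, h x * Real.log (h x) ∂ν) -
        (∫ x, h x ∂ν) * Real.log (∫ x, h x ∂ν) ≤
      (1 / ρ) * ∫ x, ‖gradient h x‖ ^ 2 / (2 * h x) ∂ν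

private lemma aux_log_ineq {t u : ℝ} (ht : 0 < t) (hu : 0 < u) :
    0 ≤ u * Real.log u - u * Real.log t - u + t := by
  have h1 : Real.log (t / u) ≤ t / u - 1 := Real.log_le_sub_one_of_pos (div_pos ht hu)
  have h2 : Real.log (t / u) = Real.log t - Real.log u := Real.log_div ht.ne' hu.ne'
  rw [h2] at h1
  have h3 := mul_le_mul_of_nonneg_left h1 hu.le
  have h4 : u * (t / u - 1) = t - u := by field_simp
  nlinarith

private lemma aux_self_le {u : ℝ} (hu : 0 < u) : u ≤ u * Real.log u + 1 := by
  have h1 : Real.log (1 / u) ≤ 1 / u - 1 := Real.log_le_sub_one_of_pos (by positivity)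
  have h2 : Real.log (1 / u) = - Real.log u := by rw [one_div, Real.log_inv]
  rw [h2] at h1
  have h3 := mul_le_mul_of_nonneg_left h1 hu.le
  have h4 : u * (1 / u - 1) = 1 - u := by field_simp
  nlinarith

/-- Holley–Stroock perturbation principle: if `ν` satisfies `LSI(ρ)` and `δψ` is a
bounded measurable function, then `ν̃` with `dν̃/dν = Z⁻¹ exp(−δψ)` satisfies
`LSI(ρ·exp(−2 osc(δψ)))`, where `osc(δψ) = sup δψ − inf δψ`. -/
theorem stmt_7 (n : ℕ) (ν : Measure (EuclideanSpace ℝ (Fin n)))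
    [IsProbabilityMeasure ν]
    (ρ : ℝ) (hρ : 0 < ρ) (hlsi : LSIconst ν ρ)
    (δψ : EuclideanSpace ℝ (Fin n) → ℝ) (hmeas : Measurable δψ)
    (Cb : ℝ) (hbd : ∀ x, |δψ x| ≤ Cb)
    (Z : ℝ) (hZ : Z = ∫ x, Real.exp (-δψ x) ∂ν)
    (νt : Measure (EuclideanSpace ℝ (Fin n)))
    (hνt : νt = ν.withDensity fun x => ENNReal.ofReal (Z⁻¹ * Real.exp (-δψ x))) :
    LSIconst νt (ρ * Real.exp (-2 * ((⨆ x, δψ x) - ⨅ x, δψ x))) := by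
  intro h hsm hpos
  set M := ⨆ x, δψ x with hMdef
  set m := ⨅ x, δψ x with hmdef
  have hbdd : BddAbove (Set.range δψ) := ⟨Cb, by rintro _ ⟨x, rfl⟩; exact (abs_le.1 (hbd x)).2⟩
  have hbdd' : BddBelow (Set.range δψ) := ⟨-Cb, by rintro _ ⟨x, rfl⟩; exact (abs_le.1 (hbd x)).1⟩
  have hxM : ∀ x, δψ x ≤ M := fun x => le_ciSup hbdd x
  have hmx : ∀ x, m ≤ δψ x := fun x => ciInf_le hbdd' x
  have hmM : m ≤ M := le_trans (hmx 0) (hxM 0)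
  set B := Real.exp (M - m) with hBdef
  have hBpos : 0 < B := Real.exp_pos _
  -- facts about Z
  have hexp_int : Integrable (fun x => Real.exp (-δψ x)) ν := by
    refine Integrable.mono' (integrable_const (Real.exp (-m)))
      (hmeas.neg.exp.aestronglyMeasurable) ?_
    filter_upwards with x
    rw [Real.norm_eq_abs, abs_of_pos (Real.exp_pos _)]
    exact Real.exp_le_exp.2 (by linarith [hmx x])
  have hZ1 : Real.exp (-M) ≤ Z := by
    rw [hZ]
    calc Real.exp (-M) = ∫ _x, Real.exp (-M) ∂ν := by simp
    _ ≤ _ := integral_mono (integrable_const _) hexp_int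
        (fun x => Real.exp_le_exp.2 (by linarith [hxM x]))
  have hZ2 : Z ≤ Real.exp (-m) := by
    rw [hZ]
    calc ∫ x, Real.exp (-δψ x) ∂ν ≤ ∫ _x, Real.exp (-m) ∂ν :=
        integral_mono hexp_int (integrable_const _)
          (fun x => Real.exp_le_exp.2 (by linarith [hmx x]))
    _ = Real.exp (-m) := by simp
  have hZpos : 0 < Z := lt_of_lt_of_le (Real.exp_pos _) hZ1
  -- density
  set dd : EuclideanSpace ℝ (Fin n) → ℝ := fun x => Z⁻¹ * Real.exp (-δψ x) with hdd
  have hddpos : ∀ x, 0 < dd x := fun x => mul_pos (inv_pos.2 hZpos) (Real.exp_pos _)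
  have hddmeas : Measurable dd := (hmeas.neg.exp).const_mul _
  have hddB : ∀ x, dd x ≤ B := by
    intro x
    have h1 : Z⁻¹ ≤ Real.exp M := by
      have := inv_anti₀ (Real.exp_pos (-M)) hZ1
      rwa [Real.exp_neg, inv_inv] at this
    have h2 : Real.exp (-δψ x) ≤ Real.exp (-m) := Real.exp_le_exp.2 (by linarith [hmx x])
    calc dd x ≤ Real.exp M * Real.exp (-m) :=
        mul_le_mul h1 h2 (Real.exp_pos _).le (Real.exp_pos _).le
    _ = B := by rw [← Real.exp_add]; ring_nf; rfl
  have hddB' : ∀ x, 1 ≤ B * dd x := by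
    intro x
    have h1 : Real.exp m ≤ Z⁻¹ := by
      have := inv_anti₀ hZpos hZ2
      rwa [Real.exp_neg, inv_inv] at this
    have h2 : Real.exp (-M) ≤ Real.exp (-δψ x) := Real.exp_le_exp.2 (by linarith [hxM x])
    have h3 : Real.exp (m - M) ≤ dd x := by
      calc Real.exp (m - M) = Real.exp m * Real.exp (-M) := by rw [← Real.exp_add]; ring_nf
      _ ≤ dd x := mul_le_mul h1 h2 (Real.exp_pos _).le (by positivity)
    calc (1:ℝ) = B * Real.exp (m - M) := by rw [hBdef, ← Real.exp_add]; simp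
    _ ≤ B * dd x := by gcongr
  -- νt is a probability measure
  have hdd_int : Integrable dd ν := hexp_int.const_mul _
  have hdd_one : ∫ x, dd x ∂ν = 1 := by
    rw [hdd, integral_const_mul, ← hZ]
    field_simp
  have hofreal : (fun x => ENNReal.ofReal (dd x))
      = fun x => (((fun y => Real.toNNReal (dd y)) x : ℝ≥0) : ℝ≥0∞) := rfl
  have hνt_prob : IsProbabilityMeasure νt := by
    constructor
    rw [hνt, withDensity_apply _ MeasurableSet.univ, Measure.restrict_univ]
    rw [← ofReal_integral_eq_lintegral_ofReal hdd_int
      (Filter.Eventually.of_forall fun x => (hddpos x).le)]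
    rw [hdd_one]
    simp
  haveI := hνt_prob
  -- transfer of integrals
  have hTint : ∀ g : EuclideanSpace ℝ (Fin n) → ℝ, ∫ x, g x ∂νt = ∫ x, dd x * g x ∂ν := by
    intro g
    rw [hνt, hofreal, integral_withDensity_eq_integral_smul hddmeas.real_toNNReal]
    congr 1
    funext x
    rw [NNReal.smul_def, Real.coe_toNNReal _ (hddpos x).le, smul_eq_mul]
  -- transfer of integrability
  have hIffInt : ∀ g : EuclideanSpace ℝ (Fin n) → ℝ, AEStronglyMeasurable g ν →
      (Integrable g νt ↔ Integrable g ν) := by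
    intro g hg
    rw [hνt, hofreal, integrable_withDensity_iff_integrable_smul hddmeas.real_toNNReal]
    have e2 : (fun x => Real.toNNReal (dd x) • g x) = fun x => dd x * g x := by
      funext x
      rw [NNReal.smul_def, Real.coe_toNNReal _ (hddpos x).le, smul_eq_mul]
    rw [e2]
    constructor
    · intro hi
      refine (hi.const_mul B).mono hg ?_
      filter_upwards with x
      rw [Real.norm_eq_abs, Real.norm_eq_abs, abs_mul B (dd x * g x), abs_of_pos hBpos,
        abs_mul (dd x) (g x), abs_of_pos (hddpos x)]
      calc |g x| = 1 * |g x| := (one_mul _).symm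
      _ ≤ (B * dd x) * |g x| := mul_le_mul_of_nonneg_right (hddB' x) (abs_nonneg _)
      _ = B * (dd x * |g x|) := by ring
    · intro hi
      refine (hi.const_mul B).mono (hddmeas.aestronglyMeasurable.mul hg) ?_
      filter_upwards with x
      rw [Real.norm_eq_abs, Real.norm_eq_abs, abs_mul B (g x), abs_of_pos hBpos,
        abs_mul (dd x) (g x), abs_of_pos (hddpos x)]
      exact mul_le_mul_of_nonneg_right (hddB x) (abs_nonneg _)
  -- comparison of integrals of nonnegative functions
  have hMulInt : ∀ g : EuclideanSpace ℝ (Fin n) → ℝ, AEStronglyMeasurable g ν →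
      Integrable g ν → Integrable (fun x => dd x * g x) ν := by
    intro g hg hgi
    refine (hgi.const_mul B).mono (hddmeas.aestronglyMeasurable.mul hg) ?_
    filter_upwards with x
    rw [Real.norm_eq_abs, Real.norm_eq_abs, abs_mul B (g x), abs_of_pos hBpos,
      abs_mul (dd x) (g x), abs_of_pos (hddpos x)]
    exact mul_le_mul_of_nonneg_right (hddB x) (abs_nonneg _)
  have hle1 : ∀ g : EuclideanSpace ℝ (Fin n) → ℝ, (∀ x, 0 ≤ g x) →
      AEStronglyMeasurable g ν → Integrable g ν →
      ∫ x, g x ∂νt ≤ B * ∫ x, g x ∂ν := by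
    intro g hg hgm hgi
    rw [hTint g, ← integral_const_mul]
    refine integral_mono (hMulInt g hgm hgi) (hgi.const_mul B) ?_
    intro x
    exact mul_le_mul_of_nonneg_right (hddB x) (hg x)
  have hle2 : ∀ g : EuclideanSpace ℝ (Fin n) → ℝ, (∀ x, 0 ≤ g x) →
      AEStronglyMeasurable g ν →
      ∫ x, g x ∂ν ≤ B * ∫ x, g x ∂νt := by
    intro g hg hgm
    by_cases hgi : Integrable g ν
    · rw [hTint g, ← integral_const_mul]
      refine integral_mono hgi ((hMulInt g hgm hgi).const_mul B) ?_
      intro x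
      calc g x = 1 * g x := (one_mul _).symm
      _ ≤ (B * dd x) * g x := mul_le_mul_of_nonneg_right (hddB' x) (hg x)
      _ = B * (dd x * g x) := by ring
    · rw [integral_undef hgi]
      exact mul_nonneg hBpos.le (integral_nonneg hg)
  -- continuity facts
  have hcont : Continuous h := hsm.continuous
  have hlogcont : Continuous fun x => Real.log (h x) :=
    Continuous.log hcont fun x => (hpos x).ne'
  have hHLcont : Continuous fun x => h x * Real.log (h x) := hcont.mul hlogcont
  set G : EuclideanSpace ℝ (Fin n) → ℝ := fun x => ‖gradient h x‖ ^ 2 / (2 * h x) with hG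
  have hGnn : ∀ x, 0 ≤ G x := fun x => div_nonneg (sq_nonneg _) (by nlinarith [hpos x])
  have hgradcont : Continuous fun x => gradient h x := by
    have h1 : Continuous fun x => fderiv ℝ h x := hsm.continuous_fderiv (by simp)
    exact (InnerProductSpace.toDual ℝ _).symm.continuous.comp h1
  have hGcont : Continuous G := by
    refine Continuous.div ((hgradcont.norm).pow 2) (continuous_const.mul hcont) ?_
    intro x
    nlinarith [hpos x]
  -- the constant
  have hconst : 1 / (ρ * Real.exp (-2 * (M - m))) = B ^ 2 / ρ := by
    have e1 : B ^ 2 = Real.exp (2 * (M - m)) := by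
      rw [hBdef, sq, ← Real.exp_add]; ring_nf
    have e2 : Real.exp (-2 * (M - m)) = (B ^ 2)⁻¹ := by
      rw [e1, ← Real.exp_neg]; ring_nf
    rw [e2]
    have hB2 : (0:ℝ) < B ^ 2 := by positivity
    field_simp
  by_cases hIl : Integrable (fun x => h x * Real.log (h x)) ν
  · -- main case : everything integrable
    have hIh : Integrable h ν := by
      refine (hIl.add (integrable_const 1)).mono hcont.aestronglyMeasurable ?_
      filter_upwards with x
      have h1 := aux_self_le (hpos x)
      have h2 : 0 < h x * Real.log (h x) + 1 := lt_of_lt_of_le (hpos x) h1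
      simp only [Pi.add_apply]
      rw [Real.norm_eq_abs, Real.norm_eq_abs, abs_of_pos (hpos x), abs_of_pos h2]
      exact h1
    have hIlT : Integrable (fun x => h x * Real.log (h x)) νt :=
      (hIffInt _ hHLcont.aestronglyMeasurable).2 hIl
    have hIhT : Integrable h νt := (hIffInt _ hcont.aestronglyMeasurable).2 hIh
    set b := ∫ x, h x ∂ν with hb
    set a := ∫ x, h x ∂νt with ha
    have hbpos : 0 < b := by
      rw [hb, integral_pos_iff_support_of_nonneg (fun x => (hpos x).le) hIh]
      have e : Function.support h = Set.univ := Set.eq_univ_of_forall fun x => (hpos x).ne'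
      rw [e, measure_univ]
      exact one_pos
    have hapos : 0 < a := by
      rw [ha, integral_pos_iff_support_of_nonneg (fun x => (hpos x).le) hIhT]
      have e : Function.support h = Set.univ := Set.eq_univ_of_forall fun x => (hpos x).ne'
      rw [e, measure_univ]
      exact one_pos
    set φ : EuclideanSpace ℝ (Fin n) → ℝ :=
      fun x => h x * Real.log (h x) - h x * Real.log b - h x + b with hφ
    have hφnn : ∀ x, 0 ≤ φ x := fun x => aux_log_ineq hbpos (hpos x)
    have hφcont : Continuous φ :=
      ((hHLcont.sub (hcont.mul continuous_const)).sub hcont).add continuous_const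
    have i3 : Integrable (fun x => h x * Real.log b) ν := hIh.mul_const _
    have i2 : Integrable (fun x => h x * Real.log (h x) - h x * Real.log b) ν := hIl.sub i3
    have i1 : Integrable (fun x => h x * Real.log (h x) - h x * Real.log b - h x) ν := i2.sub hIh
    have j3 : Integrable (fun x => h x * Real.log b) νt := hIhT.mul_const _
    have j2 : Integrable (fun x => h x * Real.log (h x) - h x * Real.log b) νt := hIlT.sub j3
    have j1 : Integrable (fun x => h x * Real.log (h x) - h x * Real.log b - h x) νt :=
      j2.sub hIhT
    have hφint : Integrable φ ν := i1.add (integrable_const _)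
    have hφintT : Integrable φ νt := j1.add (integrable_const _)
    have hφν : ∫ x, φ x ∂ν = (∫ x, h x * Real.log (h x) ∂ν) - b * Real.log b := by
      simp only [hφ]
      rw [integral_add i1 (integrable_const _), integral_sub i2 hIh,
        integral_sub hIl i3, integral_mul_const, integral_const]
      simp only [measure_univ, probReal_univ, ENNReal.toReal_one, one_smul, ← hb]
      ring
    have hφνt : ∫ x, φ x ∂νt
        = (∫ x, h x * Real.log (h x) ∂νt) - a * Real.log b - a + b := by
      simp only [hφ]
      rw [integral_add j1 (integrable_const _), integral_sub j2 hIhT,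
        integral_sub hIlT j3, integral_mul_const, integral_const]
      simp only [measure_univ, probReal_univ, ENNReal.toReal_one, one_smul, ← ha]
    have key1 : (∫ x, h x * Real.log (h x) ∂νt) - a * Real.log a ≤ ∫ x, φ x ∂νt := by
      rw [hφνt]
      have := aux_log_ineq hbpos hapos
      linarith
    have key2 : ∫ x, φ x ∂νt ≤ B * ∫ x, φ x ∂ν :=
      hle1 φ hφnn hφcont.aestronglyMeasurable hφint
    have key3 : ∫ x, φ x ∂ν ≤ (1 / ρ) * ∫ x, G x ∂ν := by
      rw [hφν]
      exact hlsi h hsm hpos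
    have key4 : ∫ x, G x ∂ν ≤ B * ∫ x, G x ∂νt :=
      hle2 G hGnn hGcont.aestronglyMeasurable
    calc (∫ x, h x * Real.log (h x) ∂νt) - a * Real.log a
        ≤ ∫ x, φ x ∂νt := key1
    _ ≤ B * ∫ x, φ x ∂ν := key2
    _ ≤ B * ((1 / ρ) * ∫ x, G x ∂ν) := by
        exact mul_le_mul_of_nonneg_left key3 hBpos.le
    _ ≤ B * ((1 / ρ) * (B * ∫ x, G x ∂νt)) := by
        refine mul_le_mul_of_nonneg_left ?_ hBpos.le
        exact mul_le_mul_of_nonneg_left key4 (by positivity)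
    _ = (1 / (ρ * Real.exp (-2 * (M - m)))) * ∫ x, G x ∂νt := by
        rw [hconst]; ring
  · by_cases hIh : Integrable h ν
    · -- impossible: h integrable but h log h not; contradict LSI by scaling
      exfalso
      set b := ∫ x, h x ∂ν with hb
      have hbpos : 0 < b := by
        rw [hb, integral_pos_iff_support_of_nonneg (fun x => (hpos x).le) hIh]
        have e : Function.support h = Set.univ := Set.eq_univ_of_forall fun x => (hpos x).ne'
        rw [e, measure_univ]
        exact one_pos
      set K := (1 / ρ) * ∫ x, G x ∂ν with hK
      set c := Real.exp (-(K + b * Real.log b + 1) / b) with hc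
      have hcpos : 0 < c := Real.exp_pos _
      have hc0 : c ≠ 0 := hcpos.ne'
      have hsm' : ContDiff ℝ (⊤ : ℕ∞) (fun x => c * h x) := hsm.const_smul c
      have hlsi2 := hlsi (fun x => c * h x) hsm' (fun x => mul_pos hcpos (hpos x))
      -- the entropy integrand is not integrable
      have hnotint : ¬ Integrable (fun x => (c * h x) * Real.log (c * h x)) ν := by
        intro hcontra
        apply hIl
        have e : (fun x => h x * Real.log (h x))
            = fun x => c⁻¹ * ((c * h x) * Real.log (c * h x)) - Real.log c * h x := by
          funext x
          rw [Real.log_mul hc0 (hpos x).ne']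
          field_simp
          ring
        rw [e]
        exact (hcontra.const_mul c⁻¹).sub (hIh.const_mul _)
      have hT1 : ∫ x, (c * h x) * Real.log (c * h x) ∂ν = 0 := integral_undef hnotint
      have hT2 : ∫ x, c * h x ∂ν = c * b := by rw [integral_const_mul, hb]
      -- the gradient term scales linearly
      have hgradnorm : ∀ x, ‖gradient (fun y => c * h y) x‖ = c * ‖gradient h x‖ := by
        intro x
        have hdiff : DifferentiableAt ℝ h x := (hsm.differentiable (by simp)).differentiableAt
        have h1 : fderiv ℝ (fun y => c * h y) x = c • fderiv ℝ h x := fderiv_const_mul hdiff c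
        have h2 : ‖gradient (fun y => c * h y) x‖ = ‖fderiv ℝ (fun y => c * h y) x‖ :=
          (InnerProductSpace.toDual ℝ _).symm.norm_map _
        have h3 : ‖gradient h x‖ = ‖fderiv ℝ h x‖ :=
          (InnerProductSpace.toDual ℝ _).symm.norm_map _
        rw [h2, h1, norm_smul, h3, Real.norm_eq_abs, abs_of_pos hcpos]
      have hT3 : (fun x => ‖gradient (fun y => c * h y) x‖ ^ 2 / (2 * (c * h x)))
          = fun x => c * G x := by
        funext x
        rw [hgradnorm x]
        simp only [hG]
        have hhx := hpos x
        field_simp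
      have hT3' : ∫ x, ‖gradient (fun y => c * h y) x‖ ^ 2 / (2 * (c * h x)) ∂ν
          = c * ∫ x, G x ∂ν := by rw [hT3, integral_const_mul]
      rw [hT1, hT2, hT3'] at hlsi2
      -- hlsi2 : 0 - c * b * log (c * b) ≤ 1/ρ * (c * ∫ G)
      rw [Real.log_mul hc0 hbpos.ne'] at hlsi2
      have hlogc : Real.log c = -(K + b * Real.log b + 1) / b := Real.log_exp _
      have hKc : 1 / ρ * (c * ∫ x, G x ∂ν) = c * K := by rw [hK]; ring
      rw [hKc, hlogc] at hlsi2
      have hexpand : c * b * (-(K + b * Real.log b + 1) / b + Real.log b)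
          = -(c * K) - c := by
        field_simp
        ring
      rw [hexpand] at hlsi2
      -- hlsi2 : 0 - (-(c*K) - c) ≤ c * K
      linarith
    · -- h itself not integrable : both sides of the entropy vanish
      have hIhT : ¬ Integrable h νt := fun hcontra =>
        hIh ((hIffInt h hcont.aestronglyMeasurable).1 hcontra)
      have hIlT : ¬ Integrable (fun x => h x * Real.log (h x)) νt := fun hcontra =>
        hIl ((hIffInt _ hHLcont.aestronglyMeasurable).1 hcontra)
      rw [integral_undef hIlT, integral_undef hIhT]
      have hrhs : 0 ≤ (1 / (ρ * Real.exp (-2 * (M - m)))) * ∫ x, G x ∂νt :=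
        mul_nonneg (by positivity) (integral_nonneg hGnn)
      simpa using hrhs
end

section
/- Let Y be the space of polynomials of degree ≤ L on [0,1] with the L² inner product, let Q : ℝ^J → Y be the L²-orthogonal projection of step functions (piecewise constant on the J subintervals of length 1/J) onto Y, and let JQᵗ : Y → ℝ^J be the operator (JQᵗ y)_j = J ∫_{(j−1)/J}^{j/J} y dθ. Then ‖Q∘(JQᵗ) − id_Y‖ ≤ C(L)/J² for a constant C(L) depending only on L. -/
/-!
Write `q = z - y` and `ȳ_j` for the average of `y` over the `j`-th cell. Testing the
orthogonality relation with `q` gives `‖q‖² = ∑_j ∫_{cell j} (ȳ_j - y) q`, and since `ȳ_j - y`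
has mean zero on its cell, `q` may be replaced there by `q - q̄_j`. All norms on the
finite-dimensional space of polynomials of degree `≤ L` are equivalent, so such a polynomial `p`
is Lipschitz on `[0, 1]` with constant `K ‖p‖`; on a cell of length `1/J` both factors are
therefore `O(‖·‖ / J)`. Summing over the `J` cells gives `‖q‖² ≤ (K / J)² ‖y‖ ‖q‖`.
-/

open MeasureTheory Real Polynomial Set
open scoped ENNReal

noncomputable def l2Norm (p : ℝ[X]) : ℝ := √(∫ t in Icc (0:ℝ) 1, p.eval t ^ 2)

lemma integral_eval_sq_pos {p : ℝ[X]} (hp : p ≠ 0) : 0 < ∫ t in Icc (0:ℝ) 1, p.eval t ^ 2 := by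
  obtain ⟨x, hx, hpx⟩ := ((Ioo_infinite zero_lt_one).sdiff (p.rootSet_finite ℝ)).nonempty
  have hcont : Continuous fun t => p.eval t ^ 2 := by fun_prop
  have hopen : IsOpen ((Function.support fun t => p.eval t ^ 2) ∩ Ioo 0 1) :=
    hcont.isOpen_support.inter isOpen_Ioo
  rw [integral_pos_iff_support_of_nonneg (fun t => sq_nonneg _) hcont.integrableOn_Icc,
    Measure.restrict_apply' measurableSet_Icc]
  refine (hopen.measure_pos volume ⟨x, ?_, hx⟩).trans_le (measure_mono ?_)
  · simpa [mem_rootSet, hp] using hpx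
  · exact inter_subset_inter_right _ Ioo_subset_Icc_self

lemma l2Norm_nonneg (p : ℝ[X]) : 0 ≤ l2Norm p := sqrt_nonneg _

lemma l2Norm_sq (p : ℝ[X]) : l2Norm p ^ 2 = ∫ t in Icc (0:ℝ) 1, p.eval t ^ 2 :=
  sq_sqrt (setIntegral_nonneg measurableSet_Icc fun _ _ => sq_nonneg _)

noncomputable abbrev degreeLTL2Core (n : ℕ) : InnerProductSpace.Core ℝ (degreeLT ℝ n) where
  inner p q := ∫ t in Icc (0:ℝ) 1, (p : ℝ[X]).eval t * (q : ℝ[X]).eval t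
  conj_inner_symm p q := by simp [mul_comm]
  re_inner_nonneg p := setIntegral_nonneg measurableSet_Icc fun _ _ => mul_self_nonneg _
  add_left p q r := by
    simp only [Submodule.coe_add, eval_add, add_mul]
    exact integral_add (Continuous.integrableOn_Icc (by fun_prop))
      (Continuous.integrableOn_Icc (by fun_prop))
  smul_left p q r := by
    simp only [SetLike.val_smul, eval_smul, smul_eq_mul, mul_assoc, conj_trivial]
    exact integral_const_mul r _
  definite p hp := by
    by_contra hne
    refine (integral_eval_sq_pos (p := p) fun h => hne (Subtype.ext h)).ne' ?_
    simpa [sq] using hp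

lemma exists_abs_coeff_le_mul_l2Norm (L : ℕ) :
    ∃ C > 0, ∀ p : ℝ[X], p.natDegree ≤ L → ∀ i, |p.coeff i| ≤ C * l2Norm p := by
  let := degreeLTL2Core (L + 1)
  let : NormedAddCommGroup (degreeLT ℝ (L + 1)) := (degreeLTL2Core (L + 1)).toNormedAddCommGroup
  let : InnerProductSpace ℝ (degreeLT ℝ (L + 1)) := InnerProductSpace.ofCore _
  let E := LinearMap.toContinuousLinearMap (degreeLTEquiv ℝ (L + 1)).toLinearMap
  refine ⟨‖E‖ + 1, by positivity, fun p hp i => ?_⟩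
  have hmem : p ∈ degreeLT ℝ (L + 1) :=
    mem_degreeLT.2 (degree_le_natDegree.trans_lt (by exact_mod_cast Nat.lt_succ_of_le hp))
  have hnorm : ‖(⟨p, hmem⟩ : degreeLT ℝ (L + 1))‖ = l2Norm p := by
    simp only [norm_eq_sqrt_real_inner, l2Norm, sq]
    rfl
  rcases lt_or_ge i (L + 1) with hi | hi
  · calc |p.coeff i| = ‖E ⟨p, hmem⟩ ⟨i, hi⟩‖ := rfl
      _ ≤ ‖E ⟨p, hmem⟩‖ := norm_le_pi_norm _ _
      _ ≤ ‖E‖ * l2Norm p := hnorm ▸ E.le_opNorm _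
      _ ≤ (‖E‖ + 1) * l2Norm p := mul_le_mul_of_nonneg_right (by linarith) (l2Norm_nonneg _)
  · rw [coeff_eq_zero_of_natDegree_lt (by omega), abs_zero]
    exact mul_nonneg (by positivity) (l2Norm_nonneg p)

lemma abs_pow_sub_pow_le_of_mem_Icc {t u : ℝ} (ht : t ∈ Icc (0:ℝ) 1) (hu : u ∈ Icc (0:ℝ) 1)
    (i : ℕ) : |t ^ i - u ^ i| ≤ i * |t - u| := by
  have hmax : max |t| |u| ^ (i - 1) ≤ 1 :=
    pow_le_one₀ (by positivity) (max_le (abs_le.2 ⟨by linarith [ht.1], ht.2⟩)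
      (abs_le.2 ⟨by linarith [hu.1], hu.2⟩))
  calc |t ^ i - u ^ i| ≤ |t - u| * i * max |t| |u| ^ (i - 1) := abs_pow_sub_pow_le t u i
    _ ≤ |t - u| * i * 1 := by gcongr
    _ = i * |t - u| := by ring

lemma exists_abs_eval_sub_le (L : ℕ) :
    ∃ K > 0, ∀ p : ℝ[X], p.natDegree ≤ L → ∀ t ∈ Icc (0:ℝ) 1, ∀ u ∈ Icc (0:ℝ) 1,
      |p.eval t - p.eval u| ≤ K * |t - u| * l2Norm p := by
  obtain ⟨C, hC, hcoeff⟩ := exists_abs_coeff_le_mul_l2Norm L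
  refine ⟨(L + 1) ^ 2 * C, by positivity, fun p hp t ht u hu => ?_⟩
  have hdeg : p.natDegree < L + 1 := Nat.lt_succ_of_le hp
  rw [eval_eq_sum_range' hdeg, eval_eq_sum_range' hdeg, ← Finset.sum_sub_distrib]
  calc |∑ i ∈ Finset.range (L + 1), (p.coeff i * t ^ i - p.coeff i * u ^ i)|
      ≤ ∑ i ∈ Finset.range (L + 1), |p.coeff i| * |t ^ i - u ^ i| := by
        refine (Finset.abs_sum_le_sum_abs _ _).trans_eq (Finset.sum_congr rfl fun i _ => ?_)
        rw [← mul_sub, abs_mul]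
    _ ≤ ∑ _i ∈ Finset.range (L + 1), C * l2Norm p * ((L + 1) * |t - u|) := by
        refine Finset.sum_le_sum fun i hi => mul_le_mul (hcoeff p hp i) ?_ (abs_nonneg _)
          (mul_nonneg hC.le (l2Norm_nonneg _))
        refine (abs_pow_sub_pow_le_of_mem_Icc ht hu i).trans
          (mul_le_mul_of_nonneg_right ?_ (abs_nonneg _))
        exact_mod_cast (Finset.mem_range.1 hi).le
    _ = (L + 1) ^ 2 * C * |t - u| * l2Norm p := by
        rw [Finset.sum_const, Finset.card_range, nsmul_eq_mul]
        push_cast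
        ring

section SetAverage

variable {α : Type*} [MeasurableSpace α] {μ : Measure α} {s : Set α} {f g : α → ℝ}

lemma abs_sub_setAverage_le (hs : MeasurableSet s) (h0 : μ s ≠ 0) (hμ : μ s ≠ ∞)
    (hf : IntegrableOn f s μ) {t : α} {M : ℝ} (h : ∀ u ∈ s, |f t - f u| ≤ M) :
    |f t - ⨍ u in s, f u ∂μ| ≤ M := by
  have hmem : ⨍ u in s, f u ∂μ ∈ Icc (f t - M) (f t + M) := by
    refine (convex_Icc _ _).set_average_mem isClosed_Icc h0 hμ ?_ hf
    refine (ae_restrict_iff' hs).2 (ae_of_all _ fun u hu => ?_)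
    have := abs_le.1 (h u hu)
    constructor <;> linarith
  exact abs_le.2 ⟨by linarith [hmem.2], by linarith [hmem.1]⟩

lemma abs_setIntegral_setAverage_sub_mul_le (hμ : μ s ≠ ∞)
    (hf : IntegrableOn f s μ) (hfg : IntegrableOn (fun x => (⨍ u in s, f u ∂μ - f x) * g x) s μ)
    {a b : ℝ} (hfa : ∀ x ∈ s, |f x - ⨍ u in s, f u ∂μ| ≤ a)
    (hgb : ∀ x ∈ s, |g x - ⨍ u in s, g u ∂μ| ≤ b) :
    |∫ x in s, (⨍ u in s, f u ∂μ - f x) * g x ∂μ| ≤ a * b * μ.real s := by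
  set F := ⨍ u in s, f u ∂μ
  set G := ⨍ u in s, g u ∂μ
  have hFf : IntegrableOn (fun x => (F - f x) * G) s μ :=
    ((integrableOn_const hμ).sub hf).mul_const G
  have hsplit : ∫ x in s, (F - f x) * g x ∂μ = ∫ x in s, (F - f x) * (g x - G) ∂μ := by
    rw [show (fun x => (F - f x) * (g x - G)) = fun x => (F - f x) * g x - (F - f x) * G by
      ext; ring, integral_sub hfg hFf, integral_mul_const, setIntegral_setAverage_sub hμ hf,
      zero_mul, sub_zero]
  rw [hsplit, ← Real.norm_eq_abs]
  refine norm_setIntegral_le_of_norm_le_const hμ.lt_top fun x hx => ?_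
  rw [Real.norm_eq_abs, abs_mul, abs_sub_comm]
  exact mul_le_mul (hfa x hx) (hgb x hx) (abs_nonneg _) ((abs_nonneg _).trans (hfa x hx))

end SetAverage

def cell (J j : ℕ) : Set ℝ := Ico (j / J) ((j + 1) / J)

lemma cell_subset_Icc {J j : ℕ} (hj : j < J) : cell J j ⊆ Icc 0 1 := by
  have hJ : (0:ℝ) < J := by exact_mod_cast j.zero_le.trans_lt hj
  refine fun t ht => ⟨(by positivity : (0:ℝ) ≤ j / J).trans ht.1, ht.2.le.trans ?_⟩
  rw [div_le_one hJ]
  exact_mod_cast hj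

lemma integrableOn_cell {f : ℝ → ℝ} (hf : Continuous f) (J j : ℕ) : IntegrableOn f (cell J j) :=
  hf.integrableOn_Icc.mono_set Ico_subset_Icc_self

lemma cell_length (J j : ℕ) : ((j:ℝ) + 1) / J - j / J = 1 / J := by ring

lemma volume_cell (J j : ℕ) : volume (cell J j) = ENNReal.ofReal (1 / J) := by
  rw [cell, Real.volume_Ico, cell_length]

lemma volume_real_cell (J j : ℕ) : volume.real (cell J j) = 1 / J := by
  rw [measureReal_def, volume_cell, ENNReal.toReal_ofReal (by positivity)]

lemma abs_sub_le_of_mem_cell {J j : ℕ} {t u : ℝ} (ht : t ∈ cell J j) (hu : u ∈ cell J j) :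
    |t - u| ≤ 1 / J := by
  have := cell_length J j
  exact abs_le.2 ⟨by linarith [ht.1, hu.2], by linarith [ht.2, hu.1]⟩

lemma setAverage_cell (J j : ℕ) (f : ℝ → ℝ) :
    ⨍ t in cell J j, f t = J * ∫ t in Icc ((j:ℝ) / J) ((j + 1) / J), f t := by
  rw [setAverage_eq, volume_real_cell, one_div, inv_inv, smul_eq_mul, cell,
    setIntegral_congr_set Ico_ae_eq_Icc]

lemma integral_Icc_eq_sum_integral_cell {J : ℕ} (hJ : 0 < J) {F : ℝ → ℝ}
    (hF : ∀ j : Fin J, IntegrableOn F (cell J j)) :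
    ∫ t in Icc (0:ℝ) 1, F t = ∑ j : Fin J, ∫ t in cell J j, F t := by
  have hcell : ∀ j : ℕ, ∫ t in cell J j, F t = ∫ t in (j:ℝ) / J..(j + 1) / J, F t := fun j => by
    rw [intervalIntegral.integral_of_le (by gcongr; linarith), cell,
      setIntegral_congr_set Ico_ae_eq_Ioc]
  rw [Fin.sum_univ_eq_sum_range (fun j => ∫ t in cell J j, F t),
    Finset.sum_congr rfl fun j _ => hcell j]
  have hint : ∀ k < J, IntervalIntegrable F volume ((k:ℕ) / (J:ℝ)) (((k + 1 : ℕ) : ℝ) / J) :=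
    fun k hk => (intervalIntegrable_iff_integrableOn_Ico_of_le (by gcongr; simp)).2
      (by simpa [cell] using hF ⟨k, hk⟩)
  have hJ' : (J:ℝ) ≠ 0 := by positivity
  have := intervalIntegral.sum_integral_adjacent_intervals hint
  push_cast at this
  rw [this, zero_div, div_self hJ', intervalIntegral.integral_of_le zero_le_one,
    integral_Icc_eq_integral_Ioc]

section Oscillation

variable {L : ℕ} {K : ℝ} (hK0 : 0 ≤ K)
  (hK : ∀ p : ℝ[X], p.natDegree ≤ L → ∀ t ∈ Icc (0:ℝ) 1, ∀ u ∈ Icc (0:ℝ) 1,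
    |p.eval t - p.eval u| ≤ K * |t - u| * l2Norm p)
include hK0 hK

lemma abs_eval_sub_setAverage_cell_le {p : ℝ[X]} (hp : p.natDegree ≤ L) {J j : ℕ} (hj : j < J)
    {t : ℝ} (ht : t ∈ cell J j) : |p.eval t - ⨍ u in cell J j, p.eval u| ≤ K / J * l2Norm p := by
  have hJ : (0:ℝ) < J := by exact_mod_cast j.zero_le.trans_lt hj
  have h0 : volume (cell J j) ≠ 0 := by
    rw [volume_cell, ne_eq, ENNReal.ofReal_eq_zero, not_le]
    positivity
  refine abs_sub_setAverage_le measurableSet_Ico h0 (volume_cell J j ▸ ENNReal.ofReal_ne_top)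
    (integrableOn_cell p.continuous J j) fun u hu => ?_
  calc |p.eval t - p.eval u| ≤ K * |t - u| * l2Norm p :=
        hK p hp t (cell_subset_Icc hj ht) u (cell_subset_Icc hj hu)
    _ ≤ K * (1 / J) * l2Norm p := by
        gcongr
        · exact l2Norm_nonneg _
        · exact abs_sub_le_of_mem_cell ht hu
    _ = K / J * l2Norm p := by ring

lemma abs_setIntegral_cell_le {y q : ℝ[X]} (hy : y.natDegree ≤ L) (hq : q.natDegree ≤ L)
    {J j : ℕ} (hj : j < J) :
    |∫ t in cell J j, ((⨍ u in cell J j, y.eval u) - y.eval t) * q.eval t| ≤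
      K / J * l2Norm y * (K / J * l2Norm q) * (1 / J) := by
  rw [← volume_real_cell J j]
  exact abs_setIntegral_setAverage_sub_mul_le (volume_cell J j ▸ ENNReal.ofReal_ne_top)
    (integrableOn_cell y.continuous J j) (integrableOn_cell (by fun_prop) J j)
    (fun _ ht => abs_eval_sub_setAverage_cell_le hK0 hK hy hj ht)
    (fun _ ht => abs_eval_sub_setAverage_cell_le hK0 hK hq hj ht)

lemma l2Norm_sub_sq_le {J : ℕ} (hJ : 0 < J) {y z : ℝ[X]} (hy : y.natDegree ≤ L)
    (hz : z.natDegree ≤ L) {s : ℝ → ℝ}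
    (hs : ∀ j : Fin J, ∀ t ∈ cell J j, s t = ⨍ u in cell J j, y.eval u)
    (horth : ∫ t in Icc (0:ℝ) 1, (s t - z.eval t) * (z - y).eval t = 0) :
    l2Norm (z - y) ^ 2 ≤ K ^ 2 / J ^ 2 * l2Norm y * l2Norm (z - y) := by
  set q := z - y
  have hq : q.natDegree ≤ L := (natDegree_sub_le z y).trans (max_le hz hy)
  set ybar : Fin J → ℝ := fun j => ⨍ u in cell J j, y.eval u
  have hstep : ∀ j : Fin J, EqOn (fun t => (s t - z.eval t) * q.eval t)
      (fun t => (ybar j - z.eval t) * q.eval t) (cell J j) := fun j t ht => by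
    simp only [hs j t ht, ybar]
  have hybar_orth : ∑ j : Fin J, ∫ t in cell J j, (ybar j - z.eval t) * q.eval t = 0 := by
    rw [← horth, integral_Icc_eq_sum_integral_cell hJ fun j =>
      (integrableOn_cell (by fun_prop) J j).congr_fun (hstep j).symm measurableSet_Ico]
    exact Finset.sum_congr rfl fun j _ => (setIntegral_congr_fun measurableSet_Ico (hstep j)).symm
  have hsum : l2Norm q ^ 2 = ∑ j : Fin J, ∫ t in cell J j, (ybar j - y.eval t) * q.eval t := by
    rw [l2Norm_sq,
      integral_Icc_eq_sum_integral_cell hJ fun j => integrableOn_cell (by fun_prop) J j,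
      ← add_zero (Finset.sum _ _), ← hybar_orth, ← Finset.sum_add_distrib]
    refine Finset.sum_congr rfl fun j _ => ?_
    rw [← integral_add (integrableOn_cell (by fun_prop) J j) (integrableOn_cell (by fun_prop) J j)]
    refine setIntegral_congr_fun measurableSet_Ico fun t _ => ?_
    simp only [q, eval_sub]
    ring
  calc l2Norm q ^ 2 ≤ ∑ j : Fin J, |∫ t in cell J j, (ybar j - y.eval t) * q.eval t| :=
        hsum.trans_le (Finset.sum_le_sum fun j _ => le_abs_self _)
    _ ≤ ∑ _j : Fin J, K / J * l2Norm y * (K / J * l2Norm q) * (1 / J) :=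
        Finset.sum_le_sum fun j _ => abs_setIntegral_cell_le hK0 hK hy hq j.isLt
    _ = K ^ 2 / J ^ 2 * l2Norm y * l2Norm q := by
        rw [Finset.sum_const, Finset.card_univ, Fintype.card_fin, nsmul_eq_mul]
        field_simp

end Oscillation

/-- `Q∘(JQᵗ)` is close to the identity: if `y` is a polynomial of degree ≤ L,
`ȳ_j = J∫_{(j−1)/J}^{j/J} y` its averages, `s` the corresponding step function and
`z` the `L²(0,1)`-orthogonal projection of `s` onto polynomials of degree ≤ L
(characterized by the orthogonality relations), then `‖z − y‖_{L²} ≤ (C(L)/J²)‖y‖_{L²}`,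
with a constant depending only on `L`. -/
theorem stmt_9 (L : ℕ) :
    ∃ C : ℝ, 0 < C ∧ ∀ J : ℕ, 0 < J →
      ∀ y z : Polynomial ℝ, y.natDegree ≤ L → z.natDegree ≤ L →
      ∀ ybar : Fin J → ℝ,
        (∀ j : Fin J,
          ybar j = J * ∫ t in Set.Icc ((j : ℝ) / J) (((j : ℝ) + 1) / J), y.eval t) →
      ∀ s : ℝ → ℝ,
        (∀ j : Fin J, ∀ t ∈ Set.Ico ((j : ℝ) / J) (((j : ℝ) + 1) / J), s t = ybar j) →
        (∀ q : Polynomial ℝ, q.natDegree ≤ L →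
          (∫ t in Set.Icc (0:ℝ) 1, (s t - z.eval t) * q.eval t) = 0) →
        (∫ t in Set.Icc (0:ℝ) 1, (z.eval t - y.eval t) ^ 2) ≤
          (C / (J : ℝ) ^ 2) ^ 2 * ∫ t in Set.Icc (0:ℝ) 1, (y.eval t) ^ 2 := by
  obtain ⟨K, hK0, hK⟩ := exists_abs_eval_sub_le L
  refine ⟨K ^ 2, by positivity, fun J hJ y z hy hz ybar hybar s hs horth => ?_⟩
  have hs_avg : ∀ j : Fin J, ∀ t ∈ cell J j, s t = ⨍ u in cell J j, y.eval u := fun j t ht => by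
    rw [hs j t ht, hybar j, setAverage_cell]
  have hsq := l2Norm_sub_sq_le hK0.le hK hJ hy hz hs_avg
    (horth _ ((natDegree_sub_le z y).trans (max_le hz hy)))
  have hle : l2Norm (z - y) ≤ K ^ 2 / J ^ 2 * l2Norm y := by
    have : 0 ≤ K ^ 2 / J ^ 2 * l2Norm y := mul_nonneg (by positivity) (l2Norm_nonneg y)
    nlinarith [l2Norm_nonneg (z - y)]
  simp only [← eval_sub, ← l2Norm_sq]
  calc l2Norm (z - y) ^ 2 ≤ (K ^ 2 / J ^ 2 * l2Norm y) ^ 2 := by gcongr; exact l2Norm_nonneg _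
    _ = (K ^ 2 / J ^ 2) ^ 2 * l2Norm y ^ 2 := by ring
end

section
/- Let φ* : H → ℝ be a C² strictly convex function on a Hilbert space H (or finite-dimensional inner product space), and let Y ⊆ Z ⊆ H be nested closed subspaces. For y ∈ Y define H_Z(y + z) := sup_{ẑ ∈ Z} (⟨y + z, ẑ⟩ − φ*(ẑ)) for z ∈ Y^⊥ ∩ Z, and H_Y(y) := sup_{ŷ ∈ Y} (⟨y, ŷ⟩ − φ*(ŷ)). Assume φ* has Hessian bounded between λ·id and Λ·id with 0 < λ ≤ Λ. Then H_Y(y) = inf_{z ∈ Y^⊥ ∩ Z} H_Z(y + z), and the infimum is attained at the unique z* with P_Y ∇H_Z(y+z*) = ∇H_Z(y+z*). -/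
open RealInnerProductSpace

/-!
Strong convexity of `φ*` makes `ŷ ↦ ⟪x, ŷ⟫ - φ*(ŷ)` coercive and strictly concave on every
subspace `W`, so it has a unique maximiser `m`, characterised by `x - ∇φ*(m) ⊥ W`; moreover
`∇H_W(x) = m`, because `H_W(x') - H_W(x) - ⟪m, x' - x⟫` is squeezed between `0` and
`‖x' - x‖² / (2λ)`. If `m` is the maximiser for `(Y, y)`, then `z* := P_{Y^⊥ ∩ Z} ∇φ*(m)` makes
`y + z* - ∇φ*(m)` orthogonal to all of `Z = Y ⊕ (Y^⊥ ∩ Z)`, so `m` is also the maximiser for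
`(Z, y + z*)` and `H_Z(y + z*) = H_Y(y)`. Since `z ⊥ Y`, the supremum defining `H_Z(y + z)` runs
over a superset of the one defining `H_Y(y)`, which gives `H_Y(y) ≤ H_Z(y + z)`. Finally, if
`∇H_Z(y + z) ∈ Y`, the maximiser for `(Z, y + z)` is the one for `(Y, y)`, which determines `z`.
-/

theorem add_deriv_add_half_le_of_le_deriv2 {φ φ' φ'' : ℝ → ℝ} {c : ℝ}
    (hφ : ∀ s, HasDerivAt φ (φ' s) s) (hφ' : ∀ s, HasDerivAt φ' (φ'' s) s)
    (hc : ∀ s, c ≤ φ'' s) : φ 0 + φ' 0 + c / 2 ≤ φ 1 := by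
  have hψ : ∀ s, HasDerivAt (fun t => φ t - c / 2 * t ^ 2) (φ' s - c * s) s := fun s =>
    ((hφ s).fun_sub ((hasDerivAt_pow 2 s).const_mul (c / 2))).congr_deriv (by simp; ring)
  have hψ' : ∀ s, HasDerivAt (fun t => φ' t - c * t) (φ'' s - c) s := fun s => by
    simpa using (hφ' s).fun_sub ((hasDerivAt_id s).const_mul c)
  have hψconv : ConvexOn ℝ Set.univ (fun t => φ t - c / 2 * t ^ 2) :=
    convexOn_of_hasDerivWithinAt2_nonneg convex_univ
      (fun s _ => (hψ s).continuousAt.continuousWithinAt)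
      (fun s _ => (hψ s).hasDerivWithinAt) (fun s _ => (hψ' s).hasDerivWithinAt)
      (fun s _ => sub_nonneg.2 (hc s))
  have := hψconv.le_slope_of_hasDerivAt trivial trivial zero_lt_one (hψ 0)
  simp only [slope_def_field] at this
  linarith

namespace Submodule

variable {E : Type*} [NormedAddCommGroup E] [InnerProductSpace ℝ E] {Y Z : Submodule ℝ E}

theorem add_starProjection_inf_sub_mem_orthogonal (hYZ : Y ≤ Z) [Y.HasOrthogonalProjection]
    [(Yᗮ ⊓ Z).HasOrthogonalProjection] {y g : E} (hy : y ∈ Y) (hyg : y - g ∈ Yᗮ) :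
    y + (Yᗮ ⊓ Z).starProjection g - g ∈ Zᗮ := by
  have hP := (Yᗮ ⊓ Z).starProjection_apply_mem g
  suffices y + (Yᗮ ⊓ Z).starProjection g - g ∈ Yᗮ ⊓ (Yᗮ ⊓ Z)ᗮ by
    rwa [inf_orthogonal, sup_orthogonal_inf_of_hasOrthogonalProjection hYZ] at this
  refine ⟨?_, ?_⟩
  · rw [add_sub_right_comm]
    exact Yᗮ.add_mem hyg (inf_le_left (b := Z) hP)
  · have hyV : y ∈ (Yᗮ ⊓ Z)ᗮ := orthogonal_le inf_le_left (le_orthogonal_orthogonal Y hy)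
    rw [add_sub_assoc, ← neg_sub]
    exact (Yᗮ ⊓ Z)ᗮ.add_mem hyV (neg_mem ((Yᗮ ⊓ Z).sub_starProjection_mem_orthogonal g))

end Submodule

section Legendre

variable {E : Type*} [NormedAddCommGroup E] [InnerProductSpace ℝ E]

noncomputable def legendreOn (W : Submodule ℝ E) (f : E → ℝ) (x : E) : ℝ :=
  sSup {r : ℝ | ∃ w ∈ W, r = ⟪x, w⟫ - f w}

variable [CompleteSpace E]

def StrongConvexFirstOrder (lam : ℝ) (f : E → ℝ) : Prop :=
  ∀ a b, f a + ⟪gradient f a, b - a⟫ + lam / 2 * ‖b - a‖ ^ 2 ≤ f b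

variable {f : E → ℝ} {lam : ℝ}

theorem strongConvexFirstOrder_of_le_iteratedFDeriv_two (hf : ContDiff ℝ 2 f)
    (hH : ∀ x v, lam * ‖v‖ ^ 2 ≤ iteratedFDeriv ℝ 2 f x ![v, v]) :
    StrongConvexFirstOrder lam f := fun a b => by
  set d := b - a
  have hline : ∀ s : ℝ, HasDerivAt (fun t : ℝ => a + t • d) d s := fun s => by
    simpa using ((hasDerivAt_id s).smul_const d).const_add a
  have hf1 : ∀ x, HasFDerivAt f (fderiv ℝ f x) x := fun x =>
    (hf.differentiable (by norm_num) x).hasFDerivAt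
  have hf2 : ∀ x, HasFDerivAt (fderiv ℝ f) (fderiv ℝ (fderiv ℝ f) x) x := fun x =>
    ((hf.fderiv_right (m := 1) (by norm_num)).differentiable (by norm_num) x).hasFDerivAt
  have key := add_deriv_add_half_le_of_le_deriv2 (c := lam * ‖d‖ ^ 2)
    (φ := fun t => f (a + t • d)) (φ' := fun t => fderiv ℝ f (a + t • d) d)
    (φ'' := fun t => iteratedFDeriv ℝ 2 f (a + t • d) ![d, d])
    (fun s => (hf1 _).comp_hasDerivAt s (hline s))
    (fun s => by
      simpa [iteratedFDeriv_two_apply] using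
        ((hf2 _).comp_hasDerivAt s (hline s)).clm_apply (hasDerivAt_const s d))
    (fun s => hH _ d)
  simp only [zero_smul, add_zero, one_smul, d, add_sub_cancel] at key
  rw [inner_gradient_left]
  linarith

variable {W Y Z : Submodule ℝ E} {x y m w : E}

theorem inner_sub_add_sq_le_of_stationary (hconv : StrongConvexFirstOrder lam f)
    (hm : m ∈ W) (hstat : x - gradient f m ∈ Wᗮ) (hw : w ∈ W) :
    ⟪x, w⟫ - f w + lam / 2 * ‖w - m‖ ^ 2 ≤ ⟪x, m⟫ - f m := by
  have h := hconv m w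
  have h0 := Submodule.inner_right_of_mem_orthogonal (W.sub_mem hw hm) hstat
  simp only [inner_sub_right, real_inner_comm x, real_inner_comm (gradient f m)] at h h0
  linarith

theorem isGreatest_of_stationary (hlam : 0 ≤ lam) (hconv : StrongConvexFirstOrder lam f)
    (hm : m ∈ W) (hstat : x - gradient f m ∈ Wᗮ) :
    IsGreatest {r : ℝ | ∃ w ∈ W, r = ⟪x, w⟫ - f w} (⟪x, m⟫ - f m) := by
  refine ⟨⟨m, hm, rfl⟩, ?_⟩
  rintro r ⟨w, hw, rfl⟩
  have := inner_sub_add_sq_le_of_stationary hconv hm hstat hw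
  nlinarith [sq_nonneg ‖w - m‖]

theorem legendreOn_eq_of_stationary (hlam : 0 ≤ lam) (hconv : StrongConvexFirstOrder lam f)
    (hm : m ∈ W) (hstat : x - gradient f m ∈ Wᗮ) :
    legendreOn W f x = ⟪x, m⟫ - f m :=
  (isGreatest_of_stationary hlam hconv hm hstat).csSup_eq

theorem eq_of_stationary (hlam : 0 < lam) (hconv : StrongConvexFirstOrder lam f)
    {m₁ m₂ : E} (hm₁ : m₁ ∈ W) (hstat₁ : x - gradient f m₁ ∈ Wᗮ)
    (hm₂ : m₂ ∈ W) (hstat₂ : x - gradient f m₂ ∈ Wᗮ) : m₁ = m₂ := by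
  have h₁ := inner_sub_add_sq_le_of_stationary hconv hm₁ hstat₁ hm₂
  have h₂ := inner_sub_add_sq_le_of_stationary hconv hm₂ hstat₂ hm₁
  rw [norm_sub_rev] at h₂
  have : ‖m₂ - m₁‖ ^ 2 = 0 := by nlinarith [sq_nonneg ‖m₂ - m₁‖]
  simpa [sub_eq_zero, eq_comm] using this

theorem exists_stationary [FiniteDimensional ℝ W] (hlam : 0 < lam) (hf : Differentiable ℝ f)
    (hconv : StrongConvexFirstOrder lam f) (x : E) :
    ∃ m ∈ W, x - gradient f m ∈ Wᗮ := by
  set g : W → ℝ := fun w => f w - ⟪x, w⟫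
  have hg : Continuous g :=
    (hf.continuous.comp continuous_subtype_val).sub (continuous_const.inner continuous_subtype_val)
  -- strong convexity at `0` gives `g w - g 0 ≥ ‖w‖ * (lam / 2 * ‖w‖ - ‖x - ∇f 0‖)`
  have hcoercive : ∀ᶠ w in Filter.cocompact W, g 0 ≤ g w := by
    filter_upwards [tendsto_norm_cocompact_atTop.eventually_ge_atTop
      (2 * ‖x - gradient f 0‖ / lam)] with w hw
    have h := hconv 0 w
    have hCS := real_inner_le_norm (x - gradient f 0) (w : E)
    rw [div_le_iff₀ hlam] at hw
    simp only [sub_zero, inner_sub_left] at h hCS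
    simp only [g, Submodule.coe_zero, inner_zero_right, sub_zero, Submodule.coe_norm] at hw ⊢
    nlinarith [mul_nonneg (norm_nonneg (w : E)) (sub_nonneg.2 hw)]
  obtain ⟨m, hmin⟩ := hg.exists_forall_le' 0 hcoercive
  have hderiv : HasFDerivAt g ((fderiv ℝ f m - innerSL ℝ x).comp W.subtypeL) m :=
    ((hf m).hasFDerivAt.sub (innerSL ℝ x).hasFDerivAt).comp m W.subtypeL.hasFDerivAt
  have hzero := IsLocalMin.hasFDerivAt_eq_zero (Filter.Eventually.of_forall hmin) hderiv
  refine ⟨m, m.2, (Submodule.mem_orthogonal' _ _).2 fun w hw => ?_⟩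
  have := congrArg (fun L => L ⟨w, hw⟩) hzero
  simp only [ContinuousLinearMap.comp_apply, sub_apply, innerSL_apply_apply,
    Submodule.subtypeL_apply, zero_apply, ← inner_gradient_left] at this
  rw [inner_sub_left]
  linarith

theorem hasGradientAt_legendreOn [FiniteDimensional ℝ W] (hlam : 0 < lam)
    (hf : Differentiable ℝ f) (hconv : StrongConvexFirstOrder lam f)
    (hm : m ∈ W) (hstat : x - gradient f m ∈ Wᗮ) :
    HasGradientAt (legendreOn W f) m x := by
  have hbound : ∀ x', |legendreOn W f x' - legendreOn W f x - ⟪m, x' - x⟫|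
      ≤ 1 / (2 * lam) * ‖x' - x‖ ^ 2 := fun x' => by
    obtain ⟨m', hm', hstat'⟩ := exists_stationary hlam hf hconv (W := W) x'
    have hval := legendreOn_eq_of_stationary hlam.le hconv hm hstat
    have hval' := legendreOn_eq_of_stationary hlam.le hconv hm' hstat'
    have hlow := inner_sub_add_sq_le_of_stationary hconv hm' hstat' hm
    have hupp := inner_sub_add_sq_le_of_stationary hconv hm hstat hm'
    have hCS := real_inner_le_norm (x' - x) (m' - m)
    simp only [inner_sub_left, inner_sub_right, real_inner_comm _ m] at hCS ⊢
    rw [hval, hval', abs_of_nonneg (by nlinarith [sq_nonneg ‖m - m'‖]), div_mul_eq_mul_div,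
      one_mul, le_div_iff₀ (by positivity)]
    nlinarith [sq_nonneg (lam * ‖m' - m‖ - ‖x' - x‖)]
  rw [hasGradientAt_iff_isLittleO]
  refine Asymptotics.IsBigO.trans_isLittleO ?_ (Asymptotics.isLittleO_pow_sub_sub x one_lt_two)
  exact Asymptotics.IsBigO.of_bound _ (Filter.Eventually.of_forall fun x' => by
    simpa using hbound x')

theorem legendreOn_le_legendreOn_add [FiniteDimensional ℝ Z] (hlam : 0 < lam)
    (hf : Differentiable ℝ f) (hconv : StrongConvexFirstOrder lam f)
    (hYZ : Y ≤ Z) (hz : z ∈ Yᗮ) :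
    legendreOn Y f y ≤ legendreOn Z f (y + z) := by
  obtain ⟨m, hm, hstat⟩ := exists_stationary hlam hf hconv (W := Z) (y + z)
  refine csSup_le_csSup (isGreatest_of_stationary hlam.le hconv hm hstat).bddAbove
    ⟨_, 0, Y.zero_mem, rfl⟩ ?_
  rintro r ⟨w, hw, rfl⟩
  refine ⟨w, hYZ hw, ?_⟩
  rw [inner_add_left, Submodule.inner_left_of_mem_orthogonal hw hz, add_zero]

theorem gradient_legendreOn_eq_of_stationary [FiniteDimensional ℝ Z] (hlam : 0 < lam)
    (hf : Differentiable ℝ f) (hconv : StrongConvexFirstOrder lam f)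
    {x m : E} (hm : m ∈ Z) (hstat : x - gradient f m ∈ Zᗮ) :
    gradient (legendreOn Z f) x = m :=
  (hasGradientAt_legendreOn hlam hf hconv hm hstat).gradient

theorem eq_of_gradient_legendreOn_add_mem [FiniteDimensional ℝ Z] (hlam : 0 < lam)
    (hf : Differentiable ℝ f) (hconv : StrongConvexFirstOrder lam f)
    (hYZ : Y ≤ Z) {z₁ z₂ : E} (hz₁ : z₁ ∈ Yᗮ ⊓ Z) (hz₂ : z₂ ∈ Yᗮ ⊓ Z)
    (hg₁ : gradient (legendreOn Z f) (y + z₁) ∈ Y)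
    (hg₂ : gradient (legendreOn Z f) (y + z₂) ∈ Y) :
    z₁ = z₂ := by
  obtain ⟨m₁, hm₁, hstat₁⟩ := exists_stationary hlam hf hconv (W := Z) (y + z₁)
  obtain ⟨m₂, hm₂, hstat₂⟩ := exists_stationary hlam hf hconv (W := Z) (y + z₂)
  rw [gradient_legendreOn_eq_of_stationary hlam hf hconv hm₁ hstat₁] at hg₁
  rw [gradient_legendreOn_eq_of_stationary hlam hf hconv hm₂ hstat₂] at hg₂
  -- a maximiser over `Z` that lies in `Y` is the maximiser over `Y` at `y`, since `z ⊥ Y`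
  have hstatY : ∀ {z m : E}, z ∈ Yᗮ ⊓ Z → y + z - gradient f m ∈ Zᗮ → y - gradient f m ∈ Yᗮ :=
    fun hz hstat => by
      convert Yᗮ.sub_mem (Submodule.orthogonal_le hYZ hstat) hz.1 using 1
      abel
  obtain rfl : m₁ = m₂ :=
    eq_of_stationary hlam hconv hg₁ (hstatY hz₁ hstat₁) hg₂ (hstatY hz₂ hstat₂)
  have hZ : z₁ - z₂ ∈ Z := Z.sub_mem hz₁.2 hz₂.2
  have hZperp : z₁ - z₂ ∈ Zᗮ := by
    convert Zᗮ.sub_mem hstat₁ hstat₂ using 1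
    abel
  exact sub_eq_zero.1 (Submodule.disjoint_def.1 Z.orthogonal_disjoint _ hZ hZperp)

end Legendre

theorem stmt_13_general (n : ℕ) (lam Lam : ℝ) (hlam : 0 < lam)
    (Y Z : Submodule ℝ (EuclideanSpace ℝ (Fin n))) (hYZ : Y ≤ Z)
    (φs : EuclideanSpace ℝ (Fin n) → ℝ) (hφs : ContDiff ℝ 2 φs)
    (hHess : ∀ x v, lam * ‖v‖ ^ 2 ≤ iteratedFDeriv ℝ 2 φs x ![v, v] ∧
      iteratedFDeriv ℝ 2 φs x ![v, v] ≤ Lam * ‖v‖ ^ 2)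
    (HZ HY : EuclideanSpace ℝ (Fin n) → ℝ)
    (hHZ : ∀ x, HZ x = sSup {r : ℝ | ∃ zh ∈ Z, r = ⟪x, zh⟫ - φs zh})
    (hHY : ∀ x, HY x = sSup {r : ℝ | ∃ yh ∈ Y, r = ⟪x, yh⟫ - φs yh})
    (y : EuclideanSpace ℝ (Fin n)) (hy : y ∈ Y) :
    HY y = sInf {r : ℝ | ∃ z ∈ (Yᗮ ⊓ Z : Submodule ℝ (EuclideanSpace ℝ (Fin n))),
        r = HZ (y + z)} ∧
    ∃! zstar : EuclideanSpace ℝ (Fin n),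
      zstar ∈ (Yᗮ ⊓ Z : Submodule ℝ (EuclideanSpace ℝ (Fin n))) ∧
      HZ (y + zstar) = HY y ∧
      ((Submodule.orthogonalProjectionOnto Y (gradient HZ (y + zstar)) :
          EuclideanSpace ℝ (Fin n)) = gradient HZ (y + zstar)) := by
  have hconv := strongConvexFirstOrder_of_le_iteratedFDeriv_two hφs fun x v => (hHess x v).1
  have hf : Differentiable ℝ φs := hφs.differentiable (by norm_num)
  obtain rfl : HZ = legendreOn Z φs := funext hHZ
  obtain rfl : HY = legendreOn Y φs := funext hHY
  obtain ⟨m, hmY, hstatY⟩ := exists_stationary hlam hf hconv (W := Y) y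
  set zs := (Yᗮ ⊓ Z).starProjection (gradient φs m)
  have hzs : zs ∈ Yᗮ ⊓ Z := (Yᗮ ⊓ Z).starProjection_apply_mem _
  have hstatZ : y + zs - gradient φs m ∈ Zᗮ :=
    Submodule.add_starProjection_inf_sub_mem_orthogonal hYZ hy hstatY
  have hval : legendreOn Z φs (y + zs) = legendreOn Y φs y := by
    rw [legendreOn_eq_of_stationary hlam.le hconv (hYZ hmY) hstatZ,
      legendreOn_eq_of_stationary hlam.le hconv hmY hstatY, inner_add_left,
      Submodule.inner_left_of_mem_orthogonal hmY hzs.1, add_zero]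
  have hgrad : gradient (legendreOn Z φs) (y + zs) = m :=
    gradient_legendreOn_eq_of_stationary hlam hf hconv (hYZ hmY) hstatZ
  have hleast : IsLeast {r | ∃ z ∈ Yᗮ ⊓ Z, r = legendreOn Z φs (y + z)} (legendreOn Y φs y) := by
    refine ⟨⟨zs, hzs, hval.symm⟩, ?_⟩
    rintro r ⟨z, hz, rfl⟩
    exact legendreOn_le_legendreOn_add hlam hf hconv hYZ hz.1
  refine ⟨hleast.csInf_eq.symm, zs,
    ⟨hzs, hval, by rw [hgrad]; exact Submodule.starProjection_eq_self_iff.2 hmY⟩, ?_⟩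
  · rintro z ⟨hz, -, hproj⟩
    refine eq_of_gradient_legendreOn_add_mem hlam hf hconv hYZ hz hzs ?_ (hgrad ▸ hmY)
    exact Submodule.starProjection_eq_self_iff.1 hproj

/-- Partial Legendre transform identity: for a uniformly convex `C²` function `φ*`
and nested subspaces `Y ⊆ Z`, the Legendre transform `H_Y` over `Y` equals the
infimum over `z ∈ Y^⊥ ∩ Z` of the Legendre transform `H_Z` over `Z` evaluated at
`y + z`, and the infimum is attained at the unique `z*` where `∇H_Z(y+z*)` is fixed
by the orthogonal projection onto `Y`. -/
theorem stmt_13 (n : ℕ) (lam Lam : ℝ) (hlam : 0 < lam) (hlL : lam ≤ Lam)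
    (Y Z : Submodule ℝ (EuclideanSpace ℝ (Fin n))) (hYZ : Y ≤ Z)
    (φs : EuclideanSpace ℝ (Fin n) → ℝ) (hφs : ContDiff ℝ 2 φs)
    (hHess : ∀ x v, lam * ‖v‖ ^ 2 ≤ iteratedFDeriv ℝ 2 φs x ![v, v] ∧
      iteratedFDeriv ℝ 2 φs x ![v, v] ≤ Lam * ‖v‖ ^ 2)
    (HZ HY : EuclideanSpace ℝ (Fin n) → ℝ)
    (hHZ : ∀ x, HZ x = sSup {r : ℝ | ∃ zh ∈ Z, r = ⟪x, zh⟫ - φs zh})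
    (hHY : ∀ x, HY x = sSup {r : ℝ | ∃ yh ∈ Y, r = ⟪x, yh⟫ - φs yh})
    (y : EuclideanSpace ℝ (Fin n)) (hy : y ∈ Y) :
    HY y = sInf {r : ℝ | ∃ z ∈ (Yᗮ ⊓ Z : Submodule ℝ (EuclideanSpace ℝ (Fin n))),
        r = HZ (y + z)} ∧
    ∃! zstar : EuclideanSpace ℝ (Fin n),
      zstar ∈ (Yᗮ ⊓ Z : Submodule ℝ (EuclideanSpace ℝ (Fin n))) ∧
      HZ (y + zstar) = HY y ∧
      ((Submodule.orthogonalProjectionOnto Y (gradient HZ (y + zstar)) :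
          EuclideanSpace ℝ (Fin n)) = gradient HZ (y + zstar)) :=
  stmt_13_general n lam Lam hlam Y Z hYZ φs hφs hHess HZ HY hHZ hHY y hy
end

section
/- Let φ*, φ̃* : ℝⁿ → ℝ be C² with λ·id ≤ Hess φ*, Hess φ̃* ≤ Λ·id, and let Y ⊆ ℝⁿ be a subspace with orthogonal projection P. Fix y ∈ Y and let ŷ, ỹ ∈ Y solve P∇φ*(ŷ) = y and P∇φ̃*(ỹ) = y. Then λ|ŷ − ỹ|² ≤ |∇φ*(ỹ) − ∇φ̃*(ỹ)| · |ŷ − ỹ|; in particular |ŷ − ỹ| ≤ (1/λ) sup_Y |∇φ* − ∇φ̃*|. -/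
/-!
Since `P∇φ*(ŷ) = P∇φ̃*(ỹ)`, the vector `∇φ*(ŷ) − ∇φ̃*(ỹ)` is orthogonal to `Y ∋ ŷ − ỹ`. Hence
strong monotonicity of `∇φ*` gives `λ|ŷ − ỹ|² ≤ ⟪∇φ̃*(ỹ) − ∇φ*(ỹ), ŷ − ỹ⟫`, and Cauchy–Schwarz
concludes.
-/

open RealInnerProductSpace

section StrongMonotonicity

variable {E : Type*} {lam : ℝ} {φ : E → ℝ}

/-- Along the segment `t ↦ x + t • v`, the directional derivative `t ↦ Dφ(x + t • v) v` has
derivative `D²φ(x + t • v)(v, v) ≥ lam ‖v‖²`; the mean value inequality on `[0, 1]` concludes. -/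
lemma mul_norm_sq_le_fderiv_add_sub_fderiv [NormedAddCommGroup E] [NormedSpace ℝ E]
    (hφ : ContDiff ℝ 2 φ) (hH : ∀ x v, lam * ‖v‖ ^ 2 ≤ iteratedFDeriv ℝ 2 φ x ![v, v])
    (x v : E) : lam * ‖v‖ ^ 2 ≤ fderiv ℝ φ (x + v) v - fderiv ℝ φ x v := by
  have hDφ : Differentiable ℝ (fderiv ℝ φ) :=
    (hφ.fderiv_right (m := 1) le_rfl).differentiable one_ne_zero
  set g : ℝ → ℝ := fun t => fderiv ℝ φ (x + t • v) v
  have hg : ∀ t, HasDerivAt g (fderiv ℝ (fderiv ℝ φ) (x + t • v) v v) t := by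
    intro t
    have hline : HasDerivAt (fun t : ℝ => x + t • v) v t := by
      simpa using ((hasDerivAt_id t).smul_const v).const_add x
    exact (ContinuousLinearMap.apply ℝ ℝ v).hasFDerivAt.comp_hasDerivAt t
      ((hDφ _).hasFDerivAt.comp_hasDerivAt t hline)
  have hg' : ∀ t, lam * ‖v‖ ^ 2 ≤ deriv g t := fun t => by
    rw [(hg t).deriv]
    simpa only [iteratedFDeriv_two_apply, Matrix.cons_val_zero, Matrix.cons_val_one] using hH (x + t • v) v
  have := mul_sub_le_image_sub_of_le_deriv (fun t => (hg t).differentiableAt) hg' zero_le_one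
  simpa [g] using this

lemma mul_norm_sub_sq_le_inner_gradient_sub [NormedAddCommGroup E] [InnerProductSpace ℝ E]
    [CompleteSpace E] (hφ : ContDiff ℝ 2 φ)
    (hH : ∀ x v, lam * ‖v‖ ^ 2 ≤ iteratedFDeriv ℝ 2 φ x ![v, v]) (a b : E) :
    lam * ‖a - b‖ ^ 2 ≤ ⟪gradient φ a - gradient φ b, a - b⟫ := by
  have h := mul_norm_sq_le_fderiv_add_sub_fderiv hφ hH b (a - b)
  rwa [add_sub_cancel, ← InnerProductSpace.toDual_symm_apply,
    ← InnerProductSpace.toDual_symm_apply, ← inner_sub_left] at h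

end StrongMonotonicity

lemma Submodule.inner_eq_inner_of_orthogonalProjectionOnto_eq {E : Type*}
    [NormedAddCommGroup E] [InnerProductSpace ℝ E] {K : Submodule ℝ E}
    [K.HasOrthogonalProjection] {u v w : E} (hw : w ∈ K)
    (h : (K.orthogonalProjectionOnto u : E) = K.orthogonalProjectionOnto v) :
    ⟪w, u⟫ = ⟪w, v⟫ := by
  rw [← K.inner_orthogonalProjectionOnto_eq_of_mem_left ⟨w, hw⟩,
    ← K.inner_orthogonalProjectionOnto_eq_of_mem_left ⟨w, hw⟩, K.coe_inner, K.coe_inner, h]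

lemma le_div_of_mul_sq_le_mul {lam a b : ℝ} (hlam : 0 < lam) (ha : 0 ≤ a) (hb : 0 ≤ b)
    (h : lam * a ^ 2 ≤ b * a) : a ≤ b / lam := by
  rw [le_div_iff₀ hlam]
  rcases ha.eq_or_lt with rfl | ha
  · simpa using hb
  · nlinarith

theorem stmt_14_general (n : ℕ) (lam Lam : ℝ) (hlam : 0 < lam)
    (φs φt : EuclideanSpace ℝ (Fin n) → ℝ)
    (hφs : ContDiff ℝ 2 φs)
    (hHs : ∀ x v, lam * ‖v‖ ^ 2 ≤ iteratedFDeriv ℝ 2 φs x ![v, v] ∧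
      iteratedFDeriv ℝ 2 φs x ![v, v] ≤ Lam * ‖v‖ ^ 2)
    (Y : Submodule ℝ (EuclideanSpace ℝ (Fin n)))
    (y : EuclideanSpace ℝ (Fin n))
    (yh yt : EuclideanSpace ℝ (Fin n)) (hyh : yh ∈ Y) (hyt : yt ∈ Y)
    (hsolh : (Submodule.orthogonalProjection Y (gradient φs yh) : EuclideanSpace ℝ (Fin n)) = y)
    (hsolt : (Submodule.orthogonalProjection Y (gradient φt yt) : EuclideanSpace ℝ (Fin n)) = y) :
    lam * ‖yh - yt‖ ^ 2 ≤ ‖gradient φs yt - gradient φt yt‖ * ‖yh - yt‖ ∧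
    ∀ ε : ℝ, (∀ x ∈ Y, ‖gradient φs x - gradient φt x‖ ≤ ε) →
      ‖yh - yt‖ ≤ ε / lam := by
  have horth : ⟪yh - yt, gradient φs yh⟫ = ⟪yh - yt, gradient φt yt⟫ :=
    Y.inner_eq_inner_of_orthogonalProjectionOnto_eq (Y.sub_mem hyh hyt) (hsolh.trans hsolt.symm)
  have hmain : lam * ‖yh - yt‖ ^ 2 ≤ ‖gradient φs yt - gradient φt yt‖ * ‖yh - yt‖ :=
    calc lam * ‖yh - yt‖ ^ 2 ≤ ⟪gradient φs yh - gradient φs yt, yh - yt⟫ :=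
        mul_norm_sub_sq_le_inner_gradient_sub hφs (fun x v => (hHs x v).1) yh yt
      _ = ⟪gradient φt yt - gradient φs yt, yh - yt⟫ := by
        rw [inner_sub_left, inner_sub_left, real_inner_comm _ (gradient φs yh), horth,
          real_inner_comm]
      _ ≤ ‖gradient φs yt - gradient φt yt‖ * ‖yh - yt‖ := by
        rw [← norm_sub_rev]; exact real_inner_le_norm _ _
  refine ⟨hmain, fun ε hε => ?_⟩
  calc ‖yh - yt‖ ≤ ‖gradient φs yt - gradient φt yt‖ / lam :=
        le_div_of_mul_sq_le_mul hlam (norm_nonneg _) (norm_nonneg _) hmain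
    _ ≤ ε / lam := by gcongr; exact hε yt hyt

/-- Comparison of constrained Legendre duals for two uniformly convex potentials:
if `P∇φ*(ŷ) = y` and `P∇φ̃*(ỹ) = y` with `ŷ, ỹ ∈ Y`, then
`λ|ŷ − ỹ|² ≤ |∇φ*(ỹ) − ∇φ̃*(ỹ)|·|ŷ − ỹ|`, and in particular
`|ŷ − ỹ| ≤ (1/λ) sup_Y |∇φ* − ∇φ̃*|`. -/
theorem stmt_14 (n : ℕ) (lam Lam : ℝ) (hlam : 0 < lam) (hlL : lam ≤ Lam)
    (φs φt : EuclideanSpace ℝ (Fin n) → ℝ)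
    (hφs : ContDiff ℝ 2 φs) (hφt : ContDiff ℝ 2 φt)
    (hHs : ∀ x v, lam * ‖v‖ ^ 2 ≤ iteratedFDeriv ℝ 2 φs x ![v, v] ∧
      iteratedFDeriv ℝ 2 φs x ![v, v] ≤ Lam * ‖v‖ ^ 2)
    (hHt : ∀ x v, lam * ‖v‖ ^ 2 ≤ iteratedFDeriv ℝ 2 φt x ![v, v] ∧
      iteratedFDeriv ℝ 2 φt x ![v, v] ≤ Lam * ‖v‖ ^ 2)
    (Y : Submodule ℝ (EuclideanSpace ℝ (Fin n)))
    (y : EuclideanSpace ℝ (Fin n)) (hy : y ∈ Y)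
    (yh yt : EuclideanSpace ℝ (Fin n)) (hyh : yh ∈ Y) (hyt : yt ∈ Y)
    (hsolh : (Submodule.orthogonalProjection Y (gradient φs yh) : EuclideanSpace ℝ (Fin n)) = y)
    (hsolt : (Submodule.orthogonalProjection Y (gradient φt yt) : EuclideanSpace ℝ (Fin n)) = y) :
    lam * ‖yh - yt‖ ^ 2 ≤ ‖gradient φs yt - gradient φt yt‖ * ‖yh - yt‖ ∧
    ∀ ε : ℝ, (∀ x ∈ Y, ‖gradient φs x - gradient φt x‖ ≤ ε) →
      ‖yh - yt‖ ≤ ε / lam :=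
  stmt_14_general n lam Lam hlam φs φt hφs hHs Y y yh yt hyh hyt hsolh hsolt
end
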